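/- arXiv:math/0402260 — 6 statements merged into one kernel-verified Lean document; each statement's English description precedes it below -/
import Mathlib

section
/- Let i, q, d : ℕ → ℝ. Suppose c : ℕ → ℕ → ℝ satisfies the triad recurrence: c(0,0) = 1, c(0,k) = 0 for all k > 0, and for all n ≥ 0 and k ≥ 0, c(n+1,k) = i(k-1)·c(n,k-1) + q(k)·c(n,k) + d(k+1)·c(n,k+1), where the term i(k-1)·c(n,k-1) is omitted (taken to be 0) when k = 0. Suppose Φ : ℕ → ℝ[X] is a sequence of polynomials with Φ(0) = 1 satisfying the dual recurrence: X·Φ(0) = q(0)·Φ(0) + i(0)·Φ(1), and for all n ≥ 1, X·Φ(n) = d(n)·Φ(n-1) + q(n)·Φ(n) + i(n)·Φ(n+1). Then for every n ≥ 0, as polynomials in ℝ[X], X^n = Σ_{k=0}^{n} c(n,k)·Φ(k). -/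
open Polynomial Finset

/-- Duality triad: the monomials expand in the triad polynomials with the
connection constants given by the triad recurrence. -/
theorem duality_triad_expansion (i q d : ℕ → ℝ) (c : ℕ → ℕ → ℝ)
    (hc00 : c 0 0 = 1)
    (hc0 : ∀ k, 0 < k → c 0 k = 0)
    (hcrec0 : ∀ n, c (n + 1) 0 = q 0 * c n 0 + d 1 * c n 1)
    (hcrec : ∀ n k, c (n + 1) (k + 1) =
      i k * c n k + q (k + 1) * c n (k + 1) + d (k + 2) * c n (k + 2))
    (Φ : ℕ → Polynomial ℝ)
    (hΦ0 : Φ 0 = 1)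
    (hΦrec0 : X * Φ 0 = C (q 0) * Φ 0 + C (i 0) * Φ 1)
    (hΦrec : ∀ n : ℕ, X * Φ (n + 1) =
      C (d (n + 1)) * Φ n + C (q (n + 1)) * Φ (n + 1) + C (i (n + 1)) * Φ (n + 2)) :
    ∀ n : ℕ, (X : Polynomial ℝ) ^ n = ∑ k ∈ range (n + 1), C (c n k) * Φ k := by
  -- c n k vanishes above the diagonal
  have hvan : ∀ n k, n < k → c n k = 0 := by
    intro n
    induction n with
    | zero => exact fun k hk => hc0 k hk
    | succ n ih =>
      intro k hk
      match k, hk with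
      | m + 1, hk =>
        have hm : n < m := by omega
        rw [hcrec n m, ih m hm, ih (m+1) (by omega), ih (m+2) (by omega)]
        ring
  -- uniform dual recurrence
  set D : ℕ → ℝ := fun k => if k = 0 then 0 else d k with hD
  have hX : ∀ k, X * Φ k = C (D k) * Φ (k - 1) + C (q k) * Φ k + C (i k) * Φ (k + 1) := by
    intro k
    cases k with
    | zero => simp [hD, hΦrec0]
    | succ m => simpa [hD] using hΦrec m
  set If : ℕ → ℝ := fun j => if j = 0 then 0 else i (j - 1) * c 0 (j - 1) with hIf
  intro n
  induction n with
  | zero => simp [hΦ0, hc00]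
  | succ n ih =>
    have step : (X : Polynomial ℝ) ^ (n + 1)
        = ∑ k ∈ range (n + 1), C (c n k) * (X * Φ k) := by
      rw [pow_succ, ih, Finset.sum_mul]
      exact Finset.sum_congr rfl fun k _ => by ring
    rw [step]
    have step2 : ∑ k ∈ range (n + 1), C (c n k) * (X * Φ k)
        = (∑ k ∈ range (n + 1), C (c n k) * (C (D k) * Φ (k - 1)))
        + (∑ k ∈ range (n + 1), C (c n k) * (C (q k) * Φ k))
        + (∑ k ∈ range (n + 1), C (c n k) * (C (i k) * Φ (k + 1))) := by
      rw [← Finset.sum_add_distrib, ← Finset.sum_add_distrib]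
      exact Finset.sum_congr rfl fun k _ => by rw [hX k]; ring
    rw [step2]
    have hA : ∑ k ∈ range (n + 1), C (c n k) * (C (D k) * Φ (k - 1))
        = ∑ j ∈ range (n + 2), C (d (j + 1) * c n (j + 1)) * Φ j := by
      rw [Finset.sum_range_succ' (fun k => C (c n k) * (C (D k) * Φ (k - 1))) n,
        Finset.sum_range_succ (fun j => C (d (j + 1) * c n (j + 1)) * Φ j) (n + 1),
        Finset.sum_range_succ (fun j => C (d (j + 1) * c n (j + 1)) * Φ j) n]
      simp only [hD, hvan n (n + 1) (by omega), hvan n (n + 2) (by omega)]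
      simp only [eq_self_iff_true, ite_true, if_pos rfl, map_zero, zero_mul, mul_zero,
        add_zero, Nat.add_eq_zero, Nat.succ_ne_zero, and_false, if_neg, ite_false]
      apply Finset.sum_congr rfl
      intro k _
      simp only [Nat.add_sub_cancel, map_mul]
      ring
    have hB : ∑ k ∈ range (n + 1), C (c n k) * (C (q k) * Φ k)
        = ∑ j ∈ range (n + 2), C (q j * c n j) * Φ j := by
      rw [Finset.sum_range_succ _ (n + 1), hvan n (n + 1) (by omega)]
      simp only [mul_zero, map_zero, zero_mul, add_zero]
      refine (Finset.sum_congr rfl fun k _ => ?_)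
      rw [map_mul]; ring
    have hE : ∑ k ∈ range (n + 1), C (c n k) * (C (i k) * Φ (k + 1))
        = ∑ j ∈ range (n + 2),
          C (if j = 0 then 0 else i (j - 1) * c n (j - 1)) * Φ j := by
      rw [Finset.sum_range_succ'
        (fun j => C (if j = 0 then 0 else i (j - 1) * c n (j - 1)) * Φ j) (n + 1)]
      simp only [Nat.succ_ne_zero, ite_false, eq_self_iff_true, ite_true, if_pos rfl,
        Nat.add_sub_cancel, map_zero, zero_mul, add_zero]
      refine (Finset.sum_congr rfl fun k _ => ?_)
      rw [map_mul]; ring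
    rw [hA, hB, hE, ← Finset.sum_add_distrib, ← Finset.sum_add_distrib]
    refine (Finset.sum_congr rfl fun j _ => ?_).symm
    cases j with
    | zero =>
      rw [hcrec0 n]
      simp only [eq_self_iff_true, ite_true, if_pos rfl, map_zero, zero_mul, add_zero,
        map_add, add_mul]
      ring
    | succ m =>
      rw [hcrec n m]
      simp only [Nat.succ_ne_zero, ite_false, Nat.add_sub_cancel, map_add, add_mul]
      ring
end

section
/- Let He_n ∈ ℤ[X] be the monic (probabilists') Hermite polynomials, defined by He_0 = 1 and He_{n+1} = X·He_n - (He_n)'. Suppose c : ℕ → ℕ → ℕ satisfies c(0,0) = 1, c(0,k) = 0 for k > 0, and for all n, k ≥ 0, c(n+1,k) = c(n,k-1) + (k+1)·c(n,k+1), where the term c(n,k-1) is omitted (taken to be 0) when k = 0. Then for every n ≥ 0, as polynomials in ℤ[X], X^n = Σ_{k=0}^{n} c(n,k)·He_k. -/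
open Polynomial Finset

lemma derivative_hermite' (n : ℕ) :
    derivative (hermite n : Polynomial ℤ) = n * hermite (n - 1) := by
  induction n with
  | zero => simp [hermite_zero]
  | succ n ih =>
    rw [hermite_succ, derivative_sub, derivative_mul, derivative_X, one_mul, ih]
    cases n with
    | zero => simp [hermite_zero]
    | succ m =>
      rw [derivative_mul, derivative_natCast, zero_mul, zero_add]
      push_cast
      rw [hermite_succ m]
      ring

/-- Hermite triad: the monomials expand in the monic Hermite polynomials,
with connection constants given by the dual recurrence. -/
theorem monomial_hermite_expansion (c : ℕ → ℕ → ℕ)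
    (hc00 : c 0 0 = 1)
    (hc0 : ∀ k, 0 < k → c 0 k = 0)
    (hcrec0 : ∀ n, c (n + 1) 0 = 1 * c n 1)
    (hcrec : ∀ n k, c (n + 1) (k + 1) = c n k + (k + 2) * c n (k + 2)) :
    ∀ n : ℕ, (X : Polynomial ℤ) ^ n =
      ∑ k ∈ range (n + 1), C (c n k : ℤ) * hermite k := by
  have hvan : ∀ n k, n < k → c n k = 0 := by
    intro n
    induction n with
    | zero => intro k hk; exact hc0 k hk
    | succ n ih =>
      intro k hk
      match k, hk with
      | k + 1, hk =>
        rw [hcrec n k, ih k (by omega), ih (k + 2) (by omega)]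
        ring
  intro n
  induction n with
  | zero => simp [hc00, hermite_zero]
  | succ n ih =>
    set g : ℕ → Polynomial ℤ := fun k => C (((k + 1) * c n (k + 1) : ℕ) : ℤ) * hermite k
      with hgdef
    have hgC : ∀ k, g k = ((k + 1 : ℕ) : Polynomial ℤ) * (C (c n (k + 1) : ℤ) * hermite k) := by
      intro k
      rw [hgdef]
      simp only [Nat.cast_mul, map_mul, map_natCast]
      ring
    have hLHS : (X : Polynomial ℤ) ^ (n + 1)
        = ∑ k ∈ range (n + 1), C (c n k : ℤ) * hermite (k + 1) + ∑ k ∈ range n, g k := by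
      rw [pow_succ, ih, mul_comm, mul_sum]
      have step : ∀ k, (X : Polynomial ℤ) * (C (c n k : ℤ) * hermite k)
          = C (c n k : ℤ) * hermite (k + 1) + C (c n k : ℤ) * derivative (hermite k) := by
        intro k; rw [hermite_succ]; ring
      rw [sum_congr rfl fun k _ => step k, sum_add_distrib]
      congr 1
      rw [Finset.sum_range_succ' (fun k => C (c n k : ℤ) * derivative (hermite k)) n]
      have h0 : C ((c n 0 : ℤ)) * derivative (hermite 0) = 0 := by
        rw [hermite_zero]; simp
      rw [h0, add_zero]
      refine sum_congr rfl fun k _ => ?_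
      rw [derivative_hermite', Nat.succ_sub_one, hgC k]
      push_cast
      ring
    have hRHS : ∑ k ∈ range (n + 2), C (c (n + 1) k : ℤ) * hermite k
        = ∑ k ∈ range (n + 1), C (c n k : ℤ) * hermite (k + 1) + ∑ k ∈ range (n + 2), g k := by
      rw [Finset.sum_range_succ' (fun k => C (c (n + 1) k : ℤ) * hermite k) (n + 1),
        Finset.sum_range_succ' g (n + 1)]
      have h0 : C ((c (n + 1) 0 : ℤ)) * hermite 0 = g 0 := by
        rw [hcrec0, hgdef]
      rw [h0]
      have step : ∀ k, C ((c (n + 1) (k + 1) : ℤ)) * hermite (k + 1)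
          = C (c n k : ℤ) * hermite (k + 1) + g (k + 1) := by
        intro k
        rw [hcrec, hgC (k + 1)]
        simp only [Nat.cast_add, Nat.cast_mul, map_add, map_mul, map_natCast]
        push_cast
        ring
      rw [sum_congr rfl fun k _ => step k, sum_add_distrib]
      ring
    have hgtrunc : ∑ k ∈ range (n + 2), g k = ∑ k ∈ range n, g k := by
      rw [sum_range_succ, sum_range_succ, hgdef]
      simp only [hvan n (n + 1) (by omega), hvan n (n + 2) (by omega), Nat.mul_zero,
        Nat.cast_zero, map_zero, zero_mul, add_zero]
    rw [hLHS, hRHS, hgtrunc]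
end

section
/- Let L : ℕ → ℚ[X] be the basic Laguerre polynomial sequence, defined by L_0 = 1, X·L_0 = -L_1, and for every k ≥ 1, X·L_k = -L_{k+1} + 2k·L_k - k(k-1)·L_{k-1}. Then for every n ≥ 1, as polynomials in ℚ[X], X^n = Σ_{k=1}^{n} C(n-1, k-1)·(n!/k!)·(-1)^k·L_k, where C(n-1,k-1) denotes the binomial coefficient. -/
/-!
Multiplication by `X` acts on coefficients in the basis `(L k)` through the three-term
recurrence, so it suffices that the signed Lah numbers `(-1) ^ k * C(n-1, k-1) * n! / k!`
satisfy the transposed recurrence in `n`. After clearing factorials this is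
`(n + 1) * C(n, j - 1) = j * C(n + 1, j)` together with Pascal's rule applied twice.
-/

open Polynomial Finset
open scoped Nat

section ThreeTermRecurrence

variable {R : Type*} [CommRing R]

/-- At `k = 0` this reads `X * L 0 = -L 1`: the truncated `L (k - 1)` has coefficient `0`. -/
def SatisfiesLaguerreRecurrence (L : ℕ → R[X]) : Prop :=
  ∀ k : ℕ, X * L k = -L (k + 1) + C (2 * (k : R)) * L k - C ((k : R) * ((k : R) - 1)) * L (k - 1)

theorem SatisfiesLaguerreRecurrence.X_mul_sum {L : ℕ → R[X]} (hL : SatisfiesLaguerreRecurrence L)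
    {c : ℕ → R} {N : ℕ} (hc0 : c 0 = 0) (hc : ∀ k, N ≤ k → c k = 0) :
    X * ∑ k ∈ range N, C (c k) * L k =
      ∑ k ∈ range (N + 1), C (-c (k - 1) + 2 * k * c k - (k + 1) * k * c (k + 1)) * L k := by
  have down : ∑ k ∈ range N, C (c k) * L (k + 1) = ∑ k ∈ range (N + 1), C (c (k - 1)) * L k := by
    simp [sum_range_succ', hc0]
  have diag : ∑ k ∈ range N, C (2 * k * c k) * L k =
      ∑ k ∈ range (N + 1), C (2 * k * c k) * L k := by
    simp [sum_range_succ, hc N le_rfl]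
  have up : ∑ k ∈ range N, C (k * (k - 1) * c k) * L (k - 1) =
      ∑ k ∈ range (N + 1), C ((k + 1) * k * c (k + 1)) * L k := by
    have extend : ∑ k ∈ range N, C (k * (k - 1) * c k) * L (k - 1) =
        ∑ k ∈ range (N + 1), C (k * (k - 1) * c k) * L (k - 1) := by
      simp [sum_range_succ, hc N le_rfl]
    rw [extend, sum_range_succ', sum_range_succ _ N, hc (N + 1) (by omega)]
    simp
  calc X * ∑ k ∈ range N, C (c k) * L k
      = ∑ k ∈ range N, (-(C (c k) * L (k + 1)) + C (2 * k * c k) * L k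
          - C (k * (k - 1) * c k) * L (k - 1)) := by
        rw [mul_sum]
        refine sum_congr rfl fun k _ ↦ ?_
        rw [mul_left_comm, hL k]
        simp only [C_mul]
        ring
    _ = ∑ k ∈ range (N + 1), (-(C (c (k - 1)) * L k) + C (2 * k * c k) * L k
          - C ((k + 1) * k * c (k + 1)) * L k) := by
        simp only [sum_sub_distrib, sum_add_distrib, sum_neg_distrib, down, diag, up]
    _ = _ := by
        simp only [map_add, map_sub, map_neg, add_mul, sub_mul, neg_mul]

end ThreeTermRecurrence

theorem Nat.choose_add_two_add_two (p m : ℕ) :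
    (p + 2).choose (m + 2) = p.choose m + 2 * p.choose (m + 1) + p.choose (m + 2) := by
  rw [Nat.choose_succ_succ', Nat.choose_succ_succ', Nat.choose_succ_succ']
  ring

/-- The unsigned Lah numbers, correct for `1 ≤ n` only; `k = 0` is special-cased because
`k - 1` truncates. -/
def lah (n k : ℕ) : ℚ :=
  if k = 0 then 0 else (n - 1).choose (k - 1) * (n ! / k ! : ℚ)

theorem lah_zero_right (n : ℕ) : lah n 0 = 0 := if_pos rfl

theorem lah_succ_right (n k : ℕ) : lah n (k + 1) = (n - 1).choose k * (n ! / (k + 1)! : ℚ) :=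
  if_neg k.succ_ne_zero

theorem lah_eq_zero_of_lt {n k : ℕ} (hn : 1 ≤ n) (h : n < k) : lah n k = 0 := by
  simp [lah, Nat.choose_eq_zero_of_lt (by omega : n - 1 < k - 1)]

theorem lah_succ_succ {n : ℕ} (hn : 1 ≤ n) (j : ℕ) :
    lah (n + 1) (j + 1) =
      lah n j + 2 * (j + 1) * lah n (j + 1) + (j + 2) * (j + 1) * lah n (j + 2) := by
  obtain ⟨p, rfl⟩ : ∃ p, n = p + 1 := ⟨n - 1, by omega⟩
  rcases j with _ | m
  · simp [lah_zero_right, lah_succ_right, Nat.factorial_succ]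
    field_simp
    ring
  · have key : (p + 2) * (p + 1).choose (m + 1) =
        (m + 2) * (p.choose m + 2 * p.choose (m + 1) + p.choose (m + 2)) := by
      rw [Nat.add_one_mul_choose_eq, Nat.choose_add_two_add_two]
      ring
    qify at key
    simp only [lah_succ_right, Nat.add_sub_cancel, Nat.factorial_succ]
    push_cast
    field_simp
    linear_combination (m + 3 : ℚ) * key

theorem SatisfiesLaguerreRecurrence.X_pow_eq_sum_lah {L : ℕ → ℚ[X]}
    (hL : SatisfiesLaguerreRecurrence L) (hL0 : L 0 = 1) {n : ℕ} (hn : 1 ≤ n) :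
    (X : ℚ[X]) ^ n = ∑ k ∈ range (n + 1), C (lah n k * (-1) ^ k) * L k := by
  induction n, hn using Nat.le_induction with
  | base =>
    have hX : X = -L 1 := by simpa [hL0] using hL 0
    simp [sum_range_succ, lah_zero_right, lah_succ_right, hX]
  | succ n hn ih =>
    have signed (j : ℕ) : lah (n + 1) j * (-1) ^ j =
        -(lah n (j - 1) * (-1) ^ (j - 1)) + 2 * j * (lah n j * (-1) ^ j)
          - (j + 1) * j * (lah n (j + 1) * (-1) ^ (j + 1)) := by
      rcases j with _ | m
      · simp [lah_zero_right]
      · rw [lah_succ_succ hn]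
        push_cast
        ring
    rw [pow_succ', ih, hL.X_mul_sum (c := fun k ↦ lah n k * (-1) ^ k)
      (by simp [lah_zero_right]) fun k hk ↦ by rw [lah_eq_zero_of_lt hn hk, zero_mul]]
    simp only [signed]

/-- Laguerre triad: `X ^ n = ∑_{k=1}^{n} C(n-1,k-1)·(n!/k!)·(-1)^k·L_k` for the
basic Laguerre polynomial sequence. -/
theorem monomial_laguerre_expansion (L : ℕ → Polynomial ℚ)
    (hL0 : L 0 = 1)
    (hL1 : X * L 0 = -L 1)
    (hLrec : ∀ k : ℕ, 1 ≤ k →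
      X * L k = -L (k + 1) + C (2 * (k : ℚ)) * L k
        - C ((k : ℚ) * ((k : ℚ) - 1)) * L (k - 1)) :
    ∀ n : ℕ, 1 ≤ n →
      (X : Polynomial ℚ) ^ n =
        ∑ k ∈ Icc 1 n,
          C (((n - 1).choose (k - 1) : ℚ) * ((n.factorial : ℚ) / (k.factorial : ℚ))
            * (-1) ^ k) * L k := by
  have hL : SatisfiesLaguerreRecurrence L := by
    rintro (_ | k)
    · simpa using hL1
    · exact hLrec _ k.succ_pos
  intro n hn
  rw [hL.X_pow_eq_sum_lah hL0 hn, ← sum_subset (s₁ := Icc 1 n)]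
  · refine sum_congr rfl fun k hk ↦ ?_
    rw [lah, if_neg (by simp only [mem_Icc] at hk; omega)]
  · intro k hk
    simp only [mem_Icc, mem_range] at hk ⊢
    omega
  · intro k hk hk'
    obtain rfl : k = 0 := by simp only [mem_Icc, mem_range] at hk hk'; omega
    simp [lah_zero_right]
end

section
/- For each k ≥ 0 let Ω_k ∈ ℚ[X] be the polynomial Ω_k(x) = U_k(x/2), where U_k is the k-th Chebyshev polynomial of the second kind. Suppose c : ℕ → ℕ → ℕ satisfies c(0,0) = 1, c(0,k) = 0 for k > 0, and for all n, k ≥ 0, c(n+1,k) = c(n,k-1) + c(n,k+1), where the term c(n,k-1) is omitted (taken to be 0) when k = 0. Then for every n ≥ 0, as polynomials in ℚ[X], X^n = Σ_{k=0}^{n} c(n,k)·Ω_k. -/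
open Polynomial Finset

/-- The rescaled Chebyshev polynomial of the second kind `Ω_k(x) = U_k(x/2)`. -/
noncomputable def Omega (k : ℕ) : Polynomial ℚ :=
  (Chebyshev.U ℚ (k : ℤ)).comp (C (1 / 2 : ℚ) * X)

lemma two_half : (2 : Polynomial ℚ) * (C (1/2 : ℚ) * X) = X := by
  rw [show (2 : Polynomial ℚ) = C (2:ℚ) from (map_ofNat C 2).symm, ← mul_assoc, ← C_mul]
  norm_num

lemma omega_zero : Omega 0 = 1 := by
  simp [Omega, Polynomial.Chebyshev.U_zero]

lemma omega_one : Omega 1 = X := by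
  simp only [Omega, Nat.cast_one, Polynomial.Chebyshev.U_one, mul_comp, ofNat_comp, X_comp]
  exact two_half

lemma omega_rec (k : ℕ) : Omega (k + 2) = X * Omega (k + 1) - Omega k := by
  unfold Omega
  push_cast
  rw [Polynomial.Chebyshev.U_add_two]
  simp only [sub_comp, mul_comp, ofNat_comp, X_comp]
  linear_combination (Polynomial.Chebyshev.U ℚ ((k:ℤ) + 1)).comp (C (1/2:ℚ) * X) * two_half

/-- Tchebychev triad: the monomials expand in the rescaled Chebyshev
polynomials `Ω_k`, with connection constants given by the dual recurrence. -/
theorem monomial_chebyshev_expansion (c : ℕ → ℕ → ℕ)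
    (hc00 : c 0 0 = 1)
    (hc0 : ∀ k, 0 < k → c 0 k = 0)
    (hcrec0 : ∀ n, c (n + 1) 0 = c n 1)
    (hcrec : ∀ n k, c (n + 1) (k + 1) = c n k + c n (k + 2)) :
    ∀ n : ℕ, (X : Polynomial ℚ) ^ n =
      ∑ k ∈ range (n + 1), C (c n k : ℚ) * Omega k := by
  have hvan : ∀ n k, n < k → c n k = 0 := by
    intro n
    induction n with
    | zero => intro k hk; exact hc0 k hk
    | succ n ih =>
      intro k hk
      match k, hk with
      | k + 1, hk =>
        rw [hcrec, ih k (by omega), ih (k+2) (by omega)]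
  intro n
  induction n with
  | zero => simp [hc00, omega_zero]
  | succ n ih =>
    set D : ℕ → Polynomial ℚ := fun k => Nat.rec 0 (fun m _ => Omega m) k with hD
    have hXO : ∀ k, X * Omega k = Omega (k + 1) + D k := by
      intro k
      cases k with
      | zero => simp [hD, omega_zero, omega_one]
      | succ m => simp only [hD]; rw [omega_rec m]; ring
    have key : (X : Polynomial ℚ) ^ (n+1) = ∑ k ∈ range (n+1), C (c n k : ℚ) * (X * Omega k) := by
      rw [pow_succ, ih, Finset.sum_mul]
      congr 1; ext k; ring
    rw [key]
    have split : ∑ k ∈ range (n+1), C (c n k : ℚ) * (X * Omega k)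
        = (∑ k ∈ range (n+1), C (c n k : ℚ) * Omega (k+1))
          + ∑ k ∈ range (n+1), C (c n k : ℚ) * D k := by
      rw [← Finset.sum_add_distrib]
      apply Finset.sum_congr rfl
      intro k _
      rw [hXO k]; ring
    rw [split]
    -- second sum
    have h2 : (∑ k ∈ range (n+1), C (c n k : ℚ) * D k)
        = ∑ k ∈ range (n+1), C (c n (k+1) : ℚ) * Omega k := by
      rw [Finset.sum_range_succ' (fun k => C (c n k : ℚ) * D k) n,
          Finset.sum_range_succ (fun k => C (c n (k+1) : ℚ) * Omega k) n]
      simp [hD, hvan n (n+1) (by omega)]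
    rw [h2]
    -- RHS
    rw [Finset.sum_range_succ' (fun k => C (c (n+1) k : ℚ) * Omega k) (n+1)]
    have h3 : ∀ k, C (c (n+1) (k+1) : ℚ) * Omega (k+1)
        = C (c n k : ℚ) * Omega (k+1) + C (c n (k+2) : ℚ) * Omega (k+1) := by
      intro k; rw [hcrec]; push_cast [C_add]; ring
    rw [Finset.sum_congr rfl (fun k _ => h3 k), Finset.sum_add_distrib, hcrec0]
    have h4 : (∑ k ∈ range (n+1), C (c n (k+2) : ℚ) * Omega (k+1))
          + C (c n 1 : ℚ) * Omega 0
        = ∑ k ∈ range (n+1), C (c n (k+1) : ℚ) * Omega k := by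
      rw [← Finset.sum_range_succ' (fun k => C (c n (k+1) : ℚ) * Omega k) (n+1),
          Finset.sum_range_succ (fun k => C (c n (k+1) : ℚ) * Omega k) (n+1)]
      simp [hvan n (n+2) (by omega)]
    rw [← h4]
    ring
end

section
/- Let A : ℕ → ℕ → ℕ be the Eulerian numbers, defined by A(0,0) = 1, A(0,k) = 0 for k > 0, and A(n+1,k) = (k+1)·A(n,k) + (n+1-k)·A(n,k-1) for all n, k ≥ 0, where the term (n+1-k)·A(n,k-1) is omitted (taken to be 0) when k = 0. Then (Worpitzky's identity) for every n ≥ 0, as polynomials in ℚ[X], X^n = Σ_{k=0}^{n} A(n,k)·C(X+k, n), where C(X+k, n) = (1/n!)·Π_{j=0}^{n-1}(X + k - j). -/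
open Polynomial Finset

/-- The falling-factorial-type product `∏_{j<n} (X + k - j)`. -/
noncomputable def wP (n k : ℕ) : Polynomial ℚ :=
  ∏ j ∈ range n, (X + Polynomial.C (k : ℚ) - Polynomial.C (j : ℚ))

lemma wP_succ (n k : ℕ) : wP (n + 1) k = wP n k * (X + C (k : ℚ) - C (n : ℚ)) :=
  prod_range_succ _ _

lemma wP_shift (n k : ℕ) : wP (n + 1) (k + 1) = (X + C (k : ℚ) + 1) * wP n k := by
  unfold wP
  rw [prod_range_succ', mul_comm]
  congr 1
  · simp only [Nat.cast_add, Nat.cast_one, Nat.cast_zero, map_add, map_one, map_zero]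
    ring
  · exact Finset.prod_congr rfl fun j _ => by
      simp only [Nat.cast_add, Nat.cast_one, map_add, map_one]
      ring

lemma wP_key (n k : ℕ) :
    C ((n : ℚ) + 1) * (X * wP n k) =
      C ((k : ℚ) + 1) * wP (n + 1) k + (C (n : ℚ) - C (k : ℚ)) * wP (n + 1) (k + 1) := by
  rw [wP_succ, wP_shift]
  simp only [map_add, map_one]
  ring

theorem worpitzky_vanish (A : ℕ → ℕ → ℕ)
    (hA0 : ∀ k, 0 < k → A 0 k = 0)
    (hArec : ∀ n k, A (n + 1) (k + 1) =
      (k + 2) * A n (k + 1) + (n + 1 - (k + 1)) * A n k) :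
    ∀ n k, n ≤ k → A n (k + 1) = 0 := by
  intro n
  induction n with
  | zero => intro k _; exact hA0 _ k.succ_pos
  | succ n ih =>
    intro k hk
    rw [hArec]
    have h1 : A n (k + 1) = 0 := ih k (by omega)
    have h2 : n + 1 - (k + 1) = 0 := by omega
    simp [h1, h2]

theorem worpitzky_aux (A : ℕ → ℕ → ℕ)
    (hA00 : A 0 0 = 1)
    (hA0 : ∀ k, 0 < k → A 0 k = 0)
    (hArec0 : ∀ n, A (n + 1) 0 = 1 * A n 0)
    (hArec : ∀ n k, A (n + 1) (k + 1) =
      (k + 2) * A n (k + 1) + (n + 1 - (k + 1)) * A n k) :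
    ∀ n : ℕ, C ((n.factorial : ℚ)) * X ^ n =
      ∑ k ∈ range (n + 1), C (A n k : ℚ) * wP n k := by
  intro n
  induction n with
  | zero => simp [hA00, wP]
  | succ n ih =>
    have hvan := worpitzky_vanish A hA0 hArec
    calc C (((n + 1).factorial : ℚ)) * X ^ (n + 1)
        = C ((n : ℚ) + 1) * (X * (C ((n.factorial : ℚ)) * X ^ n)) := by
          have h : (((n + 1).factorial : ℚ)) = ((n : ℚ) + 1) * (n.factorial : ℚ) := by
            rw [Nat.factorial_succ]; push_cast; ring
          rw [h, map_mul]; ring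
      _ = C ((n : ℚ) + 1) * (X * ∑ k ∈ range (n + 1), C (A n k : ℚ) * wP n k) := by
          rw [ih]
      _ = ∑ k ∈ range (n + 1), C (A n k : ℚ) * (C ((n : ℚ) + 1) * (X * wP n k)) := by
          rw [Finset.mul_sum, Finset.mul_sum]
          exact Finset.sum_congr rfl fun k _ => by ring
      _ = ∑ k ∈ range (n + 1), C (A n k : ℚ) *
            (C ((k : ℚ) + 1) * wP (n + 1) k + (C (n : ℚ) - C (k : ℚ)) * wP (n + 1) (k + 1)) := by
          exact Finset.sum_congr rfl fun k _ => by rw [wP_key]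
      _ = (∑ k ∈ range (n + 1), C (((k + 1) * A n k : ℕ) : ℚ) * wP (n + 1) k) +
          ∑ k ∈ range (n + 1), C (((n - k) * A n k : ℕ) : ℚ) * wP (n + 1) (k + 1) := by
          rw [← Finset.sum_add_distrib]
          refine Finset.sum_congr rfl fun k hk => ?_
          have hkn : k ≤ n := by simpa [Nat.lt_succ_iff] using hk
          have h1 : (((k + 1) * A n k : ℕ) : ℚ) = ((k : ℚ) + 1) * (A n k : ℚ) := by
            push_cast; ring
          have h2 : (((n - k) * A n k : ℕ) : ℚ) = ((n : ℚ) - (k : ℚ)) * (A n k : ℚ) := by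
            push_cast [Nat.cast_sub hkn]; ring
          rw [h1, h2, map_mul, map_mul, map_sub]
          ring
      _ = ∑ k ∈ range (n + 1 + 1), C (A (n + 1) k : ℚ) * wP (n + 1) k := by
          rw [Finset.sum_range_succ' (fun k => C (A (n + 1) k : ℚ) * wP (n + 1) k) (n + 1)]
          rw [Finset.sum_range_succ' (fun k => C (((k + 1) * A n k : ℕ) : ℚ) * wP (n + 1) k) n]
          have hsplit : ∀ k ∈ range (n + 1),
              C (A (n + 1) (k + 1) : ℚ) * wP (n + 1) (k + 1) =
                C (((k + 2) * A n (k + 1) : ℕ) : ℚ) * wP (n + 1) (k + 1) +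
                C (((n - k) * A n k : ℕ) : ℚ) * wP (n + 1) (k + 1) := by
            intro k _
            rw [hArec]
            have : n + 1 - (k + 1) = n - k := by omega
            rw [this]
            push_cast
            rw [map_add]
            ring
          rw [Finset.sum_congr rfl hsplit, Finset.sum_add_distrib]
          have hT1 : ∑ k ∈ range (n + 1), C (((k + 2) * A n (k + 1) : ℕ) : ℚ) * wP (n + 1) (k + 1)
              = ∑ k ∈ range n, C (((k + 2) * A n (k + 1) : ℕ) : ℚ) * wP (n + 1) (k + 1) := by
            rw [Finset.sum_range_succ]
            have h0 : A n (n + 1) = 0 := hvan n n le_rfl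
            simp [h0]
          rw [hT1, hArec0]
          have hc : ∀ k : ℕ, ((k + 1 + 1) * A n (k + 1) : ℕ) = ((k + 2) * A n (k + 1) : ℕ) :=
            fun k => by ring
          simp only [hc]
          ring

/-- Worpitzky's identity: `X ^ n = ∑ A(n,k) · C(X+k, n)` where `A` are the
Eulerian numbers and `C(X+k, n) = (1/n!) ∏_{j<n} (X + k - j)`. -/
theorem worpitzky_identity (A : ℕ → ℕ → ℕ)
    (hA00 : A 0 0 = 1)
    (hA0 : ∀ k, 0 < k → A 0 k = 0)
    (hArec0 : ∀ n, A (n + 1) 0 = 1 * A n 0)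
    (hArec : ∀ n k, A (n + 1) (k + 1) =
      (k + 2) * A n (k + 1) + (n + 1 - (k + 1)) * A n k) :
    ∀ n : ℕ, (X : Polynomial ℚ) ^ n =
      ∑ k ∈ range (n + 1), C (A n k : ℚ) *
        (C (1 / (n.factorial : ℚ)) * ∏ j ∈ range n, (X + C (k : ℚ) - C (j : ℚ))) := by
  intro n
  have haux := worpitzky_aux A hA00 hA0 hArec0 hArec n
  have hfac : (n.factorial : ℚ) ≠ 0 := by
    exact_mod_cast n.factorial_ne_zero
  calc (X : Polynomial ℚ) ^ n
      = C (1 / (n.factorial : ℚ)) * (C ((n.factorial : ℚ)) * X ^ n) := by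
        rw [← mul_assoc, ← map_mul]
        rw [one_div, inv_mul_cancel₀ hfac]
        simp
    _ = ∑ k ∈ range (n + 1), C (A n k : ℚ) *
          (C (1 / (n.factorial : ℚ)) * ∏ j ∈ range n, (X + C (k : ℚ) - C (j : ℚ))) := by
        rw [haux, Finset.mul_sum]
        exact Finset.sum_congr rfl fun k _ => by unfold wP; ring
end

section
/- Let r, s : ℕ → ℝ be root sequences (indexed from 1) and define the monic persistent-root polynomial sequences q_n = Π_{j=1}^{n}(X - r_j) and p_n = Π_{j=1}^{n}(X - s_j) in ℝ[X]. Suppose L : ℕ → ℕ → ℝ satisfies L(n,k) = 0 for k > n and p_n = Σ_{k=0}^{n} L(n,k)·q_k for all n ≥ 0 (such L exists and is unique since the q_k are monic of degree k). Then the generalized Lah numbers L(n,k) satisfy: for every n ≥ 0, L(n+1,0) = (r_1 - s_{n+1})·L(n,0), and for every n ≥ 0 and k ≥ 1, L(n+1,k) = L(n,k-1) + (r_{k+1} - s_{n+1})·L(n,k). -/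
open Polynomial Finset

private lemma q_monic (r : ℕ → ℝ) (k : ℕ) :
    (∏ j ∈ Icc 1 k, (X - C (r j))).Monic :=
  monic_prod_of_monic _ _ (fun j _ => monic_X_sub_C _)

private lemma q_natDegree (r : ℕ → ℝ) (k : ℕ) :
    (∏ j ∈ Icc 1 k, (X - C (r j))).natDegree = k := by
  rw [natDegree_prod_of_monic _ _ (fun j _ => monic_X_sub_C _)]
  simp

private lemma coeffs_eq_zero (r : ℕ → ℝ) :
    ∀ m (c : ℕ → ℝ), (∑ k ∈ range m, C (c k) * ∏ j ∈ Icc 1 k, (X - C (r j))) = 0 →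
      ∀ k < m, c k = 0 := by
  intro m
  induction m with
  | zero => intro c _ k hk; omega
  | succ t ih =>
    intro c h k hk
    have hct : c t = 0 := by
      have h2 := congrArg (fun p => p.coeff t) h
      simp only [finset_sum_coeff, coeff_zero] at h2
      rw [Finset.sum_eq_single t] at h2
      · rw [coeff_C_mul] at h2
        have : (∏ j ∈ Icc 1 t, (X - C (r j))).coeff t = 1 := by
          have := (q_monic r t).leadingCoeff
          rwa [Polynomial.leadingCoeff, q_natDegree] at this
        rw [this, mul_one] at h2
        exact h2
      · intro b hb hbne
        have hb' : b < t := lt_of_le_of_ne (Nat.lt_succ_iff.mp (mem_range.mp hb)) hbne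
        rw [coeff_C_mul, coeff_eq_zero_of_natDegree_lt (by rw [q_natDegree]; exact hb'),
          mul_zero]
      · intro hnot; exact absurd (mem_range.mpr (Nat.lt_succ_self t)) hnot
    rcases eq_or_lt_of_le (Nat.lt_succ_iff.mp hk) with heq | hlt
    · rw [heq]; exact hct
    · apply ih c _ k hlt
      rw [Finset.sum_range_succ, hct, map_zero, zero_mul, add_zero] at h
      exact h

/-- Generalized Lah numbers: the connection constants between two monic
persistent-root polynomial sequences satisfy the triad-type recurrence
`L(n+1,k) = L(n,k-1) + (r_{k+1} - s_{n+1})·L(n,k)`. -/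
theorem generalized_lah_recurrence (r s : ℕ → ℝ) (L : ℕ → ℕ → ℝ)
    (hLtri : ∀ n k, n < k → L n k = 0)
    (hLdef : ∀ n : ℕ, (∏ j ∈ Icc 1 n, (X - C (s j))) =
      ∑ k ∈ range (n + 1), C (L n k) * ∏ j ∈ Icc 1 k, (X - C (r j))) :
    (∀ n : ℕ, L (n + 1) 0 = (r 1 - s (n + 1)) * L n 0) ∧
    (∀ n k : ℕ, 1 ≤ k →
      L (n + 1) k = L n (k - 1) + (r (k + 1) - s (n + 1)) * L n k) := by
  set Q : ℕ → ℝ[X] := fun k => ∏ j ∈ Icc 1 k, (X - C (r j)) with hQ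
  have hQsucc : ∀ k, Q (k + 1) = Q k * (X - C (r (k + 1))) := by
    intro k
    rw [hQ]
    exact Finset.prod_Icc_succ_top (Nat.le_add_left 1 k) _
  -- D is the candidate value for L (n+1) k
  have key : ∀ n k, k < n + 2 → L (n + 1) k =
      (if k = 0 then (r 1 - s (n + 1)) * L n 0
       else L n (k - 1) + (r (k + 1) - s (n + 1)) * L n k) := by
    intro n k hk
    set D : ℕ → ℝ := fun k =>
      if k = 0 then (r 1 - s (n + 1)) * L n 0
      else L n (k - 1) + (r (k + 1) - s (n + 1)) * L n k with hD
    have hps : (∏ j ∈ Icc 1 (n+1), (X - C (s j))) =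
        (∏ j ∈ Icc 1 n, (X - C (s j))) * (X - C (s (n+1))) :=
      Finset.prod_Icc_succ_top (Nat.le_add_left 1 n) _
    have main : ∑ j ∈ range (n + 2), C (L (n+1) j) * Q j
        = ∑ j ∈ range (n + 2), C (D j) * Q j := by
      rw [← hLdef (n+1), hps, hLdef n, Finset.sum_mul]
      have expand : ∀ j, (C (L n j) * Q j) * (X - C (s (n+1)))
          = C (L n j) * Q (j+1) + C ((r (j+1) - s (n+1)) * L n j) * Q j := by
        intro j
        rw [hQsucc j, map_mul, map_sub]
        ring
      rw [Finset.sum_congr rfl (fun j _ => expand j), Finset.sum_add_distrib]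
      have h1 : ∑ j ∈ range (n+2), C (D j) * Q j
          = (∑ j ∈ range (n+1), C (D (j+1)) * Q (j+1)) + C (D 0) * Q 0 :=
        Finset.sum_range_succ' _ _
      have h2 : ∑ j ∈ range (n+1), C ((r (j+1) - s (n+1)) * L n j) * Q j
          = (∑ j ∈ range n, C ((r (j+2) - s (n+1)) * L n (j+1)) * Q (j+1))
            + C ((r 1 - s (n+1)) * L n 0) * Q 0 :=
        Finset.sum_range_succ' _ _
      have h3 : ∑ j ∈ range n, C ((r (j+2) - s (n+1)) * L n (j+1)) * Q (j+1)
          = ∑ j ∈ range (n+1), C ((r (j+2) - s (n+1)) * L n (j+1)) * Q (j+1) := by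
        rw [Finset.sum_range_succ, hLtri n (n+1) (Nat.lt_succ_self n), mul_zero,
          map_zero, zero_mul, add_zero]
      rw [h1, h2, h3, ← add_assoc, ← Finset.sum_add_distrib]
      have hD0 : D 0 = (r 1 - s (n+1)) * L n 0 := by simp [hD]
      rw [hD0]
      congr 1
      apply Finset.sum_congr rfl
      intro j _
      have : D (j+1) = L n j + (r (j+2) - s (n+1)) * L n (j+1) := by simp [hD]
      rw [this, map_add]
      ring
    have hzero : ∑ j ∈ range (n + 2), C (L (n+1) j - D j) * Q j = 0 := by
      have : ∑ j ∈ range (n + 2), C (L (n+1) j - D j) * Q j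
          = (∑ j ∈ range (n + 2), C (L (n+1) j) * Q j)
            - ∑ j ∈ range (n + 2), C (D j) * Q j := by
        rw [← Finset.sum_sub_distrib]
        apply Finset.sum_congr rfl
        intro j _
        rw [map_sub]; ring
      rw [this, main, sub_self]
    have h4 : L (n+1) k - D k = 0 :=
      coeffs_eq_zero r (n+2) (fun j => L (n+1) j - D j) hzero k hk
    have h5 : L (n+1) k = D k := by linarith
    rw [h5, hD]
  constructor
  · intro n
    have := key n 0 (by omega)
    simpa using this
  · intro n k hk1
    rcases Nat.lt_or_ge k (n + 2) with hlt | hge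
    · have := key n k hlt
      rw [if_neg (by omega)] at this
      exact this
    · rw [hLtri (n+1) k (by omega), hLtri n (k-1) (by omega), hLtri n k (by omega),
        mul_zero, add_zero]
end
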